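/- (Quantitative inequality in the proof of Theorem A.1(d)) Let X and Y be finite-valued random variables, S a random variable with values in a nonempty finite type 𝒮, Z : Ω → ℝ a random variable taking finitely many real values, and g : 𝒮 → ℝ a function; define E := g ∘ S + Z. If S ⊥ Z | X and S ⊥ Z | (X, Y), then I(Y; E | X) ≤ I(Y; S | X) + I(Y; Z | X); equivalently, I(Y; E | X) − I(Y; Z | X) ≤ I(Y; S | X). -/

import Mathlib

open MeasureTheory

namespace MarginalTransfer

variable {Ω : Type*} [MeasurableSpace Ω]

/-- `P(A) := μ(A)`, as a real number. -/
noncomputable def pr (μ : Measure Ω) (A : Set Ω) : ℝ := (μ A).toReal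

/-- Conditional mutual information
`I(U;V|W) := Σ_{u,v,w} P(U=u, V=v, W=w) ·
  log( (P(U=u, V=v, W=w) · P(W=w)) / (P(U=u, W=w) · P(V=v, W=w)) )`
for finitely-valued random variables; any summand whose leading factor
`P(U=u, V=v, W=w)` is zero vanishes. -/
noncomputable def condMI {α β γ : Type*} (μ : Measure Ω)
    (U : Ω → α) (V : Ω → β) (W : Ω → γ) : ℝ :=
  ∑' u : α, ∑' v : β, ∑' w : γ,
    pr μ {ω | U ω = u ∧ V ω = v ∧ W ω = w} *
      Real.log (pr μ {ω | U ω = u ∧ V ω = v ∧ W ω = w} * pr μ {ω | W ω = w} /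
        (pr μ {ω | U ω = u ∧ W ω = w} * pr μ {ω | V ω = v ∧ W ω = w}))

/-- Unconditional mutual information `I(U;V)`: the same formula with `W` a
constant random variable. -/
noncomputable def mutualInfo {α β : Type*} (μ : Measure Ω)
    (U : Ω → α) (V : Ω → β) : ℝ :=
  condMI μ U V (fun _ => (() : Unit))

/-- Conditional independence `U ⟂ V ∣ W`:
`P(U=u, V=v, W=w) · P(W=w) = P(U=u, W=w) · P(V=v, W=w)` for all `u, v, w`. -/
def CondIndep {α β γ : Type*} (μ : Measure Ω)
    (U : Ω → α) (V : Ω → β) (W : Ω → γ) : Prop :=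
  ∀ u v w,
    pr μ {ω | U ω = u ∧ V ω = v ∧ W ω = w} * pr μ {ω | W ω = w} =
      pr μ {ω | U ω = u ∧ W ω = w} * pr μ {ω | V ω = v ∧ W ω = w}

/-- Unconditional independence `U ⟂ V`: conditional independence given a
constant random variable. -/
def Indep {α β : Type*} (μ : Measure Ω) (U : Ω → α) (V : Ω → β) : Prop :=
  CondIndep μ U V (fun _ => (() : Unit))

/-- Shannon entropy `H(U) := −Σ_u P(U=u) · log P(U=u)`. -/
noncomputable def entropy {α : Type*} (μ : Measure Ω) (U : Ω → α) : ℝ :=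
  -∑' u : α, pr μ {ω | U ω = u} * Real.log (pr μ {ω | U ω = u})

/-- Conditional Shannon entropy
`H(U|V) := −Σ_{u,v} P(U=u, V=v) · log( P(U=u, V=v) / P(V=v) )`. -/
noncomputable def condEntropy {α β : Type*} (μ : Measure Ω)
    (U : Ω → α) (V : Ω → β) : ℝ :=
  -∑' u : α, ∑' v : β,
    pr μ {ω | U ω = u ∧ V ω = v} *
      Real.log (pr μ {ω | U ω = u ∧ V ω = v} / pr μ {ω | V ω = v})

end MarginalTransfer

open MarginalTransfer

/-! `E` is a function of the pair `(S, Z)`, so the data-processing inequality (the log-sum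
inequality applied on each fibre of `(s, z) ↦ g s + z`) gives `I(Y;E|X) ≤ I(Y;(S,Z)|X)`.
The two conditional independences make every summand of `I(Y;(S,Z)|X)` factor:
`P(y,s,z,x) P(x) / (P(y,x) P(s,z,x))` is the product of `P(y,s,x) P(x) / (P(y,x) P(s,x))`
and `P(y,z,x) P(x) / (P(y,x) P(z,x))`, and summing out `z`, resp. `s`, yields
`I(Y;(S,Z)|X) = I(Y;S|X) + I(Y;Z|X)`. -/

namespace MarginalTransfer

open Finset Real

theorem mul_log_add_sub_le_mul_log_div {a b c : ℝ} (ha : 0 ≤ a) (hb : 0 ≤ b)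
    (hab : b = 0 → a = 0) (hc : 0 < c) :
    a * log c + a - b * c ≤ a * log (a / b) := by
  rcases ha.eq_or_lt with rfl | ha
  · simpa using mul_nonneg hb hc.le
  have hb : 0 < b := hb.lt_of_ne fun h => ha.ne' (hab h.symm)
  have key :=
    mul_le_mul_of_nonneg_left (log_le_sub_one_of_pos (by positivity : 0 < c * b / a)) ha.le
  rw [mul_sub, mul_one, mul_div_cancel₀ _ ha.ne', log_div (by positivity) ha.ne',
    log_mul hc.ne' hb.ne'] at key
  rw [log_div ha.ne' hb.ne']
  linarith

theorem sum_mul_log_sum_div_sum_le {ι : Type*} (t : Finset ι) {a b : ι → ℝ}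
    (ha : ∀ i ∈ t, 0 ≤ a i) (hb : ∀ i ∈ t, 0 ≤ b i) (hab : ∀ i ∈ t, b i = 0 → a i = 0) :
    (∑ i ∈ t, a i) * log ((∑ i ∈ t, a i) / ∑ i ∈ t, b i) ≤ ∑ i ∈ t, a i * log (a i / b i) := by
  rcases (sum_nonneg ha).eq_or_lt with hA | hA
  · rw [← hA, zero_mul]
    refine sum_nonneg fun i hi => ?_
    simp [(sum_eq_zero_iff_of_nonneg ha).1 hA.symm i hi]
  obtain ⟨i, hi, hai⟩ := exists_lt_of_sum_lt (f := fun _ => (0 : ℝ)) (by simpa using hA)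
  have hB : 0 < ∑ i ∈ t, b i :=
    sum_pos' hb ⟨i, hi, (hb i hi).lt_of_ne fun h => hai.ne' (hab i hi h.symm)⟩
  calc (∑ i ∈ t, a i) * log ((∑ i ∈ t, a i) / ∑ i ∈ t, b i)
      = ∑ i ∈ t, (a i * log ((∑ i ∈ t, a i) / ∑ i ∈ t, b i) + a i -
          b i * ((∑ i ∈ t, a i) / ∑ i ∈ t, b i)) := by
        rw [sum_sub_distrib, sum_add_distrib, ← sum_mul, ← sum_mul, mul_div_cancel₀ _ hB.ne']
        ring
    _ ≤ ∑ i ∈ t, a i * log (a i / b i) := sum_le_sum fun i hi =>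
        mul_log_add_sub_le_mul_log_div (ha i hi) (hb i hi) (hab i hi) (by positivity)

theorem sum_mul_log_mul_div_le {ι : Type*} (t : Finset ι) {a d : ι → ℝ} {b c : ℝ}
    (ha : ∀ i ∈ t, 0 ≤ a i) (had : ∀ i ∈ t, a i ≤ d i) (hab : ∀ i ∈ t, a i ≤ b)
    (hac : ∀ i ∈ t, a i ≤ c) :
    (∑ i ∈ t, a i) * log ((∑ i ∈ t, a i) * c / (b * ∑ i ∈ t, d i)) ≤
      ∑ i ∈ t, a i * log (a i * c / (b * d i)) := by
  have key := sum_mul_log_sum_div_sum_le t (b := fun i => b * d i / c) ha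
    (fun i hi => div_nonneg (mul_nonneg ((ha i hi).trans (hab i hi)) ((ha i hi).trans (had i hi)))
      ((ha i hi).trans (hac i hi)))
    fun i hi h0 => by
      rcases div_eq_zero_iff.1 h0 with h | h
      · rcases mul_eq_zero.1 h with h | h
        · exact (ha i hi).antisymm' (h ▸ hab i hi)
        · exact (ha i hi).antisymm' (h ▸ had i hi)
      · exact (ha i hi).antisymm' (h ▸ hac i hi)
  simpa only [← mul_sum, ← sum_div, div_div_eq_mul_div] using key

/- Read `pX` as `P(X, W = w)`: `h` and `h'` are the conditional independences of `V`, `V'`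
given `(W, U)` and given `W`. -/
theorem log_mul_div_eq_add_of_mul_eq {p pw pu pv pv' puv puv' pvv' : ℝ} (hpw : pw ≠ 0)
    (hpu : pu ≠ 0) (hpv : pv ≠ 0) (hpv' : pv' ≠ 0) (hpuv : puv ≠ 0) (hpuv' : puv' ≠ 0)
    (hpvv' : pvv' ≠ 0) (h : p * pu = puv * puv') (h' : pvv' * pw = pv * pv') :
    log (p * pw / (pu * pvv')) = log (puv * pw / (pu * pv)) + log (puv' * pw / (pu * pv')) := by
  rw [← log_mul (by positivity) (by positivity)]
  congr 1
  field_simp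
  linear_combination pv * pv' * h - puv * puv' * h'

section Probability

variable {Ω : Type*} [MeasurableSpace Ω] {μ : Measure Ω}

theorem pr_nonneg (A : Set Ω) : 0 ≤ pr μ A := ENNReal.toReal_nonneg

theorem pr_mono [IsFiniteMeasure μ] {A B : Set Ω} (h : A ⊆ B) : pr μ A ≤ pr μ B :=
  ENNReal.toReal_mono (measure_ne_top μ B) (measure_mono h)

theorem sum_pr_eq_pr [IsFiniteMeasure μ] {β : Type*} {V : Ω → β} {t : Finset β}
    {p : Ω → Prop} {q : β → Ω → Prop} (hpt : ∀ ω, p ω → V ω ∈ t)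
    (hq : ∀ v ∈ t, ∀ ω, q v ω ↔ p ω ∧ V ω = v) (hqm : ∀ v ∈ t, MeasurableSet {ω | q v ω}) :
    ∑ v ∈ t, pr μ {ω | q v ω} = pr μ {ω | p ω} := by
  have hunion : {ω | p ω} = ⋃ v ∈ t, {ω | q v ω} := by
    ext ω
    simp only [Set.mem_ofPred_eq, Set.mem_iUnion, exists_prop]
    exact ⟨fun h => ⟨V ω, hpt ω h, (hq _ (hpt ω h) ω).2 ⟨h, rfl⟩⟩,
      fun ⟨v, hv, h⟩ => ((hq v hv ω).1 h).1⟩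
  have hdisj : (t : Set β).PairwiseDisjoint fun v => {ω | q v ω} := by
    refine fun v hv v' hv' hne => Set.disjoint_left.2 fun ω h h' => hne ?_
    exact ((hq v hv ω).1 h).2.symm.trans ((hq v' hv' ω).1 h').2
  rw [hunion, pr, measure_biUnion_finset hdisj hqm,
    ENNReal.toReal_sum fun v _ => measure_ne_top μ _]
  rfl

theorem condMI_eq_sum {α β γ : Type*} {U : Ω → α} {V : Ω → β} {W : Ω → γ}
    {tU : Finset α} {tV : Finset β} {tW : Finset γ}
    (hU : ∀ ω, U ω ∈ tU) (hV : ∀ ω, V ω ∈ tV) (hW : ∀ ω, W ω ∈ tW) :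
    condMI μ U V W = ∑ u ∈ tU, ∑ v ∈ tV, ∑ w ∈ tW,
      pr μ {ω | U ω = u ∧ V ω = v ∧ W ω = w} *
        log (pr μ {ω | U ω = u ∧ V ω = v ∧ W ω = w} * pr μ {ω | W ω = w} /
          (pr μ {ω | U ω = u ∧ W ω = w} * pr μ {ω | V ω = v ∧ W ω = w})) := by
  have hmem : ∀ u v w, pr μ {ω | U ω = u ∧ V ω = v ∧ W ω = w} ≠ 0 →
      u ∈ tU ∧ v ∈ tV ∧ w ∈ tW := by
    intro u v w h
    obtain ⟨ω, rfl, rfl, rfl⟩ : {ω | U ω = u ∧ V ω = v ∧ W ω = w}.Nonempty :=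
      Set.nonempty_iff_ne_empty.2 fun he => h (by rw [he]; simp [pr])
    exact ⟨hU ω, hV ω, hW ω⟩
  have hterm : ∀ u v w, ¬(u ∈ tU ∧ v ∈ tV ∧ w ∈ tW) →
      pr μ {ω | U ω = u ∧ V ω = v ∧ W ω = w} *
        log (pr μ {ω | U ω = u ∧ V ω = v ∧ W ω = w} * pr μ {ω | W ω = w} /
          (pr μ {ω | U ω = u ∧ W ω = w} * pr μ {ω | V ω = v ∧ W ω = w})) = 0 :=
    fun u v w h => mul_eq_zero_of_left (not_not.1 fun h' => h (hmem u v w h')) _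
  rw [condMI, tsum_eq_sum fun u hu => by
    simp only [fun v w => hterm u v w (by tauto), tsum_zero]]
  refine sum_congr rfl fun u hu => ?_
  rw [tsum_eq_sum fun v hv => by simp only [fun w => hterm u v w (by tauto), tsum_zero]]
  exact sum_congr rfl fun v hv => tsum_eq_sum fun w hw => hterm u v w (by tauto)

theorem condMI_comp_le [IsFiniteMeasure μ] {α β γ δ : Type*}
    [MeasurableSpace α] [MeasurableSingletonClass α] [MeasurableSpace β]
    [MeasurableSingletonClass β] [MeasurableSpace γ] [MeasurableSingletonClass γ]
    {U : Ω → α} {V : Ω → β} {W : Ω → γ} (hU : Measurable U) (hV : Measurable V)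
    (hW : Measurable W) {tU : Finset α} {tV : Finset β} {tW : Finset γ}
    (htU : ∀ ω, U ω ∈ tU) (htV : ∀ ω, V ω ∈ tV) (htW : ∀ ω, W ω ∈ tW) (f : β → δ) :
    condMI μ U (fun ω => f (V ω)) W ≤ condMI μ U V W := by
  classical
  rw [condMI_eq_sum htU (fun ω => mem_image_of_mem f (htV ω)) htW, condMI_eq_sum htU htV htW]
  refine sum_le_sum fun u _ => ?_
  rw [sum_comm, sum_comm (s := tV)]
  refine sum_le_sum fun w _ => ?_
  rw [← sum_fiberwise_of_maps_to fun v hv => mem_image_of_mem f hv]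
  refine sum_le_sum fun d _ => ?_
  have hjoint : pr μ {ω | U ω = u ∧ f (V ω) = d ∧ W ω = w} =
      ∑ v ∈ tV with f v = d, pr μ {ω | U ω = u ∧ V ω = v ∧ W ω = w} :=
    (sum_pr_eq_pr (q := fun v ω => U ω = u ∧ V ω = v ∧ W ω = w)
      (fun ω h => mem_filter.2 ⟨htV ω, h.2.1⟩) (fun v hv ω => by grind)
      fun v _ => (hU (measurableSet_singleton u)).inter
        ((hV (measurableSet_singleton v)).inter (hW (measurableSet_singleton w)))).symm
  have hmarg : pr μ {ω | f (V ω) = d ∧ W ω = w} =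
      ∑ v ∈ tV with f v = d, pr μ {ω | V ω = v ∧ W ω = w} :=
    (sum_pr_eq_pr (q := fun v ω => V ω = v ∧ W ω = w)
      (fun ω h => mem_filter.2 ⟨htV ω, h.1⟩) (fun v hv ω => by grind)
      fun v _ => (hV (measurableSet_singleton v)).inter (hW (measurableSet_singleton w))).symm
  rw [hjoint, hmarg]
  exact sum_mul_log_mul_div_le _ (fun _ _ => pr_nonneg _)
    (fun _ _ => pr_mono fun ω h => h.2) (fun _ _ => pr_mono fun ω h => ⟨h.1, h.2.2⟩)
    (fun _ _ => pr_mono fun ω h => h.2.2)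

theorem condMI_summand_prod_eq_add [IsFiniteMeasure μ] {α β β' γ : Type*}
    {U : Ω → α} {V : Ω → β} {V' : Ω → β'} {W : Ω → γ} (hW_indep : CondIndep μ V V' W)
    (hWU_indep : CondIndep μ V V' fun ω => (W ω, U ω)) (u : α) (v : β) (v' : β') (w : γ) :
    pr μ {ω | U ω = u ∧ V ω = v ∧ V' ω = v' ∧ W ω = w} *
        log (pr μ {ω | U ω = u ∧ V ω = v ∧ V' ω = v' ∧ W ω = w} * pr μ {ω | W ω = w} /
          (pr μ {ω | U ω = u ∧ W ω = w} * pr μ {ω | V ω = v ∧ V' ω = v' ∧ W ω = w})) =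
      pr μ {ω | U ω = u ∧ V ω = v ∧ V' ω = v' ∧ W ω = w} *
        log (pr μ {ω | U ω = u ∧ V ω = v ∧ W ω = w} * pr μ {ω | W ω = w} /
          (pr μ {ω | U ω = u ∧ W ω = w} * pr μ {ω | V ω = v ∧ W ω = w})) +
      pr μ {ω | U ω = u ∧ V ω = v ∧ V' ω = v' ∧ W ω = w} *
        log (pr μ {ω | U ω = u ∧ V' ω = v' ∧ W ω = w} * pr μ {ω | W ω = w} /
          (pr μ {ω | U ω = u ∧ W ω = w} * pr μ {ω | V' ω = v' ∧ W ω = w})) := by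
  rcases (pr_nonneg (μ := μ) {ω | U ω = u ∧ V ω = v ∧ V' ω = v' ∧ W ω = w}).eq_or_lt
    with hp | hp
  · simp [← hp]
  have hpos : ∀ {A : Set Ω}, {ω | U ω = u ∧ V ω = v ∧ V' ω = v' ∧ W ω = w} ⊆ A →
      pr μ A ≠ 0 := fun h => (hp.trans_le (pr_mono h)).ne'
  have hUW : pr μ {ω | U ω = u ∧ V ω = v ∧ V' ω = v' ∧ W ω = w} *
        pr μ {ω | U ω = u ∧ W ω = w} =
      pr μ {ω | U ω = u ∧ V ω = v ∧ W ω = w} *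
        pr μ {ω | U ω = u ∧ V' ω = v' ∧ W ω = w} := by
    convert hWU_indep v v' (w, u) using 3 <;> ext ω <;>
      simp only [Set.mem_ofPred_eq, Prod.mk.injEq] <;> tauto
  rw [← mul_add]
  congr 1
  exact log_mul_div_eq_add_of_mul_eq (hpos fun ω h => h.2.2.2)
    (hpos fun ω h => ⟨h.1, h.2.2.2⟩) (hpos fun ω h => ⟨h.2.1, h.2.2.2⟩)
    (hpos fun ω h => h.2.2) (hpos fun ω h => ⟨h.1, h.2.1, h.2.2.2⟩)
    (hpos fun ω h => ⟨h.1, h.2.2⟩) (hpos fun ω h => h.2) hUW (hW_indep v v' w)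

theorem condMI_prod_eq_add_of_condIndep [IsFiniteMeasure μ] {α β β' γ : Type*}
    [MeasurableSpace α] [MeasurableSingletonClass α] [MeasurableSpace β]
    [MeasurableSingletonClass β] [MeasurableSpace β'] [MeasurableSingletonClass β']
    [MeasurableSpace γ] [MeasurableSingletonClass γ]
    {U : Ω → α} {V : Ω → β} {V' : Ω → β'} {W : Ω → γ} (hU : Measurable U) (hV : Measurable V)
    (hV' : Measurable V') (hW : Measurable W) {tU : Finset α} {tV : Finset β} {tV' : Finset β'}
    {tW : Finset γ} (htU : ∀ ω, U ω ∈ tU) (htV : ∀ ω, V ω ∈ tV) (htV' : ∀ ω, V' ω ∈ tV')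
    (htW : ∀ ω, W ω ∈ tW) (hW_indep : CondIndep μ V V' W)
    (hWU_indep : CondIndep μ V V' fun ω => (W ω, U ω)) :
    condMI μ U (fun ω => (V ω, V' ω)) W = condMI μ U V W + condMI μ U V' W := by
  rw [condMI_eq_sum htU (fun ω => mem_product.2 ⟨htV ω, htV' ω⟩) htW, condMI_eq_sum htU htV htW,
    condMI_eq_sum htU htV' htW, ← sum_add_distrib]
  refine sum_congr rfl fun u _ => ?_
  simp only [sum_product, Prod.mk.injEq, and_assoc]
  have hterm := condMI_summand_prod_eq_add hW_indep hWU_indep u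
  have hmargV' : ∀ v w, ∑ v' ∈ tV', pr μ {ω | U ω = u ∧ V ω = v ∧ V' ω = v' ∧ W ω = w} =
      pr μ {ω | U ω = u ∧ V ω = v ∧ W ω = w} := fun v w =>
    sum_pr_eq_pr (fun ω _ => htV' ω) (fun v' _ ω => by tauto) fun v' _ =>
      (hU (measurableSet_singleton u)).inter ((hV (measurableSet_singleton v)).inter
        ((hV' (measurableSet_singleton v')).inter (hW (measurableSet_singleton w))))
  have hmargV : ∀ v' w, ∑ v ∈ tV, pr μ {ω | U ω = u ∧ V ω = v ∧ V' ω = v' ∧ W ω = w} =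
      pr μ {ω | U ω = u ∧ V' ω = v' ∧ W ω = w} := fun v' w =>
    sum_pr_eq_pr (fun ω _ => htV ω) (fun v _ ω => by tauto) fun v _ =>
      (hU (measurableSet_singleton u)).inter ((hV (measurableSet_singleton v)).inter
        ((hV' (measurableSet_singleton v')).inter (hW (measurableSet_singleton w))))
  simp only [hterm, sum_add_distrib]
  congr 1
  · refine sum_congr rfl fun v _ => ?_
    rw [sum_comm]
    simp only [← sum_mul, hmargV']
  · rw [sum_comm]
    refine sum_congr rfl fun v' _ => ?_
    rw [sum_comm]
    simp only [← sum_mul, hmargV]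

end Probability

end MarginalTransfer

theorem quantitative_inequality_A_1_d_general
    {Ω : Type*} [MeasurableSpace Ω] (μ : Measure Ω) [IsProbabilityMeasure μ]
    {𝒳 𝒴 𝒮 : Type*}
    [Fintype 𝒳] [MeasurableSpace 𝒳] [MeasurableSingletonClass 𝒳]
    [Fintype 𝒴] [MeasurableSpace 𝒴] [MeasurableSingletonClass 𝒴]
    [Fintype 𝒮] [MeasurableSpace 𝒮] [MeasurableSingletonClass 𝒮]
    (X : Ω → 𝒳) (Y : Ω → 𝒴) (S : Ω → 𝒮) (Z : Ω → ℝ)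
    (hX : Measurable X) (hY : Measurable Y) (hS : Measurable S) (hZ : Measurable Z)
    (hZfin : (Set.range Z).Finite)
    (g : 𝒮 → ℝ) (E : Ω → ℝ) (hE : E = fun ω => g (S ω) + Z ω)
    (hSZ_X : CondIndep μ S Z X)
    (hSZ_XY : CondIndep μ S Z (fun ω => (X ω, Y ω))) :
    condMI μ Y E X ≤ condMI μ Y S X + condMI μ Y Z X := by
  have htZ : ∀ ω, Z ω ∈ hZfin.toFinset := fun ω => hZfin.mem_toFinset.2 ⟨ω, rfl⟩
  subst hE
  calc condMI μ Y (fun ω => g (S ω) + Z ω) X ≤ condMI μ Y (fun ω => (S ω, Z ω)) X :=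
        condMI_comp_le (μ := μ) hY (hS.prodMk hZ) hX (fun _ => Finset.mem_univ _)
          (fun ω => Finset.mem_product.2 ⟨Finset.mem_univ _, htZ ω⟩) (fun _ => Finset.mem_univ _)
          fun p => g p.1 + p.2
    _ = condMI μ Y S X + condMI μ Y Z X :=
        condMI_prod_eq_add_of_condIndep hY hS hZ hX (fun _ => Finset.mem_univ _)
          (fun _ => Finset.mem_univ _) htZ (fun _ => Finset.mem_univ _) hSZ_X hSZ_XY

/-- **Quantitative inequality in the proof of Theorem A.1(d)**.
Let `X, Y` be finite-valued random variables, `S` a random variable with values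
in a nonempty finite type, `Z : Ω → ℝ` a random variable taking finitely many
real values, and `E := g ∘ S + Z`.  If `S ⟂ Z ∣ X` and `S ⟂ Z ∣ (X, Y)`, then
`I(Y; E ∣ X) ≤ I(Y; S ∣ X) + I(Y; Z ∣ X)`. -/
theorem quantitative_inequality_A_1_d
    {Ω : Type*} [MeasurableSpace Ω] (μ : Measure Ω) [IsProbabilityMeasure μ]
    {𝒳 𝒴 𝒮 : Type*}
    [Fintype 𝒳] [Nonempty 𝒳] [MeasurableSpace 𝒳] [MeasurableSingletonClass 𝒳]
    [Fintype 𝒴] [Nonempty 𝒴] [MeasurableSpace 𝒴] [MeasurableSingletonClass 𝒴]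
    [Fintype 𝒮] [Nonempty 𝒮] [MeasurableSpace 𝒮] [MeasurableSingletonClass 𝒮]
    (X : Ω → 𝒳) (Y : Ω → 𝒴) (S : Ω → 𝒮) (Z : Ω → ℝ)
    (hX : Measurable X) (hY : Measurable Y) (hS : Measurable S) (hZ : Measurable Z)
    (hZfin : (Set.range Z).Finite)
    (g : 𝒮 → ℝ) (E : Ω → ℝ) (hE : E = fun ω => g (S ω) + Z ω)
    (hSZ_X : CondIndep μ S Z X)
    (hSZ_XY : CondIndep μ S Z (fun ω => (X ω, Y ω))) :
    condMI μ Y E X ≤ condMI μ Y S X + condMI μ Y Z X :=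
  quantitative_inequality_A_1_d_general μ X Y S Z hX hY hS hZ hZfin g E hE hSZ_X hSZ_XY
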